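/- For m ≥ 2 and positive reals l_1,…,l_m with l = ∑ l_i, the sum over all partitions of {1,…,m} into two nonempty blocks I_1, I_2 with 1 ∈ I_1 of (∑_{i∈I_1} l_i)^{|I_1|−1} (∑_{i∈I_2} l_i)^{|I_2|−1} equals (m−1) l^{m−2}. -/

import Mathlib

/-! The sum is a specialisation of Hurwitz's multivariate form of Abel's identity
`∑_{S ⊆ s} x (x + z_S)^{|S|-1} (y + z_{s∖S})^{|s∖S|} = (x + y + z_s)^{|s|}`,
proved by induction on `s`: peeling off an index `j ∈ s ∖ S` shows that the `y`-derivative of the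
left side is the sum over `j ∈ s` of the left side for `s ∖ {j}` at `y + z_j`, and the same peeling
evaluates it at `y = 0`. Summing the identity for `s ∖ {j}` at `x = z_j` over `j ∈ s` and grouping
by the block `B = S ∪ {j}` gives
`∑_{∅ ≠ B ⊆ s} z_B^{|B|-1} (x + z_{s∖B})^{|s∖B|} = |s| (x + z_s)^{|s|-1}`,
because `∑_{j ∈ B} z_j z_B^{|B|-2} = z_B^{|B|-1}`. The theorem is the case `s = {1,…,m} ∖ {1}`,
`x = l_1`, with `B` the block not containing `1`. -/

open Finset

section Abel

variable {ι R : Type*} [DecidableEq ι]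

/-- The multivariate Abel polynomial `x (x + z_S) ^ (|S| - 1)`, with the value `1` at `S = ∅` that
the formula has for `x ≠ 0` (truncated subtraction would give `x`). -/
def abelPoly [CommSemiring R] (z : ι → R) (S : Finset ι) (x : R) : R :=
  if S = ∅ then 1 else x * (x + ∑ i ∈ S, z i) ^ (#S - 1)

def hurwitzSum [CommSemiring R] (z : ι → R) (s : Finset ι) (x y : R) : R :=
  ∑ S ∈ s.powerset, abelPoly z S x * (y + ∑ i ∈ s \ S, z i) ^ #(s \ S)

theorem sum_abelPoly_erase [CommSemiring R] (z : ι → R) {B : Finset ι} (hB : B.Nonempty) :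
    ∑ j ∈ B, abelPoly z (B.erase j) (z j) = (∑ i ∈ B, z i) ^ (#B - 1) := by
  obtain hB1 | hB2 : #B = 1 ∨ 2 ≤ #B := by have := hB.card_pos; omega
  · obtain ⟨a, rfl⟩ := card_eq_one.1 hB1
    simp [abelPoly]
  · have hterm : ∀ j ∈ B, abelPoly z (B.erase j) (z j) = z j * (∑ i ∈ B, z i) ^ (#B - 2) := by
      intro j hj
      have hne : B.erase j ≠ ∅ := by
        rw [Ne, ← card_eq_zero, card_erase_of_mem hj]; omega
      rw [abelPoly, if_neg hne, add_sum_erase _ _ hj, card_erase_of_mem hj, Nat.sub_sub]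
    rw [sum_congr rfl hterm, ← sum_mul, ← pow_succ']
    congr 1
    omega

theorem sum_sum_powerset_erase {M : Type*} [AddCommMonoid M] (s : Finset ι)
    (f : ι → Finset ι → M) :
    ∑ j ∈ s, ∑ S ∈ (s.erase j).powerset, f j S = ∑ B ∈ s.powerset, ∑ j ∈ B, f j (B.erase j) := by
  have hinsert : ∀ j ∈ s, ∑ S ∈ (s.erase j).powerset, f j S
      = ∑ B ∈ s.powerset with j ∈ B, f j (B.erase j) := by
    intro j hj
    refine sum_nbij' (insert j) (erase · j) ?_ ?_ ?_ ?_ ?_ <;> intro S hS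
    all_goals simp only [mem_filter, mem_powerset] at hS ⊢
    · exact ⟨insert_subset hj (hS.trans (erase_subset j s)), mem_insert_self j S⟩
    · exact erase_subset_erase j hS.1
    · exact erase_insert fun h => by simpa using hS h
    · exact insert_erase hS.2
    · rw [erase_insert fun h => by simpa using hS h]
  rw [sum_congr rfl hinsert]
  exact sum_comm' fun j B => by simp only [mem_filter, mem_powerset]; grind

theorem sum_abelPoly_mul_sum_sdiff [CommSemiring R] (z c : ι → R) (s : Finset ι) (x y : R) :
    ∑ S ∈ s.powerset, abelPoly z S x *
        ∑ j ∈ s \ S, c j * (y + ∑ i ∈ s \ S, z i) ^ (#(s \ S) - 1)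
      = ∑ j ∈ s, c j * hurwitzSum z (s.erase j) x (y + z j) := by
  simp only [hurwitzSum, mul_sum]
  rw [sum_comm' (t' := s) (s' := fun j => (s.erase j).powerset)
    fun S j => by simp only [mem_powerset, mem_sdiff, subset_erase]; tauto]
  refine sum_congr rfl fun j hj => sum_congr rfl fun S hS => ?_
  have hjS : j ∈ s \ S := mem_sdiff.2 ⟨hj, fun h => by simpa using mem_powerset.1 hS h⟩
  rw [erase_sdiff_comm, ← add_sum_erase _ _ hjS, card_erase_of_mem hjS, add_assoc]
  ring

theorem hurwitzSum_zero_right [CommSemiring R] (z : ι → R) {s : Finset ι} (hs : s.Nonempty)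
    (x : R) :
    hurwitzSum z s x 0
      = x * (x + ∑ i ∈ s, z i) ^ (#s - 1) + ∑ j ∈ s, z j * hurwitzSum z (s.erase j) x (z j) := by
  have hs_mem := mem_powerset_self s
  have hs_ne : s ≠ ∅ := hs.ne_empty
  have hpeel := sum_abelPoly_mul_sum_sdiff z z s x 0
  simp only [zero_add] at hpeel
  rw [← hpeel, hurwitzSum, ← add_sum_erase _ _ hs_mem, ← add_sum_erase _ _ hs_mem]
  simp only [sdiff_self, bot_eq_empty, sum_empty, card_empty, pow_zero, mul_zero, zero_add, mul_one]
  rw [abelPoly, if_neg hs_ne]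
  congr 1
  refine sum_congr rfl fun S hS => ?_
  obtain ⟨hSs, hSsub⟩ := mem_erase.1 hS
  have hU : (s \ S).Nonempty :=
    sdiff_nonempty.2 fun h => hSs (subset_antisymm (mem_powerset.1 hSsub) h)
  rw [← sum_mul, ← pow_succ', Nat.sub_add_cancel hU.card_pos]

theorem hasDerivAt_hurwitzSum (z : ι → ℝ) (s : Finset ι) (x y : ℝ) :
    HasDerivAt (hurwitzSum z s x) (∑ j ∈ s, hurwitzSum z (s.erase j) x (y + z j)) y := by
  have htermwise := HasDerivAt.fun_sum (u := s.powerset) fun S _ =>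
    (((hasDerivAt_id' y).add_const (∑ i ∈ s \ S, z i)).fun_pow #(s \ S)).const_mul (abelPoly z S x)
  have hpeel := sum_abelPoly_mul_sum_sdiff z 1 s x y
  simp only [Pi.one_apply, one_mul, sum_const, nsmul_eq_mul, mul_one] at hpeel htermwise
  rw [← hpeel]
  exact htermwise

theorem hurwitzSum_eq (z : ι → ℝ) (s : Finset ι) (x y : ℝ) :
    hurwitzSum z s x y = (x + y + ∑ i ∈ s, z i) ^ #s := by
  induction s using strongInduction generalizing y with
  | H s ih =>
  rcases s.eq_empty_or_nonempty with rfl | hs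
  · simp [hurwitzSum, abelPoly]
  have ih_erase : ∀ w, ∀ j ∈ s,
      hurwitzSum z (s.erase j) x (w + z j) = (x + w + ∑ i ∈ s, z i) ^ (#s - 1) := by
    intro w j hj
    rw [ih _ (erase_ssubset hj), card_erase_of_mem hj, ← add_sum_erase _ _ hj]
    ring_nf
  have hderiv : ∀ w, HasDerivAt (hurwitzSum z s x) (#s * (x + w + ∑ i ∈ s, z i) ^ (#s - 1)) w := by
    intro w
    have := hasDerivAt_hurwitzSum z s x w
    rwa [sum_congr rfl (ih_erase w), sum_const, nsmul_eq_mul] at this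
  have hderiv' : ∀ w, HasDerivAt (fun w => (x + w + ∑ i ∈ s, z i) ^ #s)
      (#s * (x + w + ∑ i ∈ s, z i) ^ (#s - 1)) w := by
    intro w
    simpa using (((hasDerivAt_id' w).const_add x).add_const (∑ i ∈ s, z i)).fun_pow #s
  have hzero : hurwitzSum z s x 0 = (x + 0 + ∑ i ∈ s, z i) ^ #s := by
    have := ih_erase 0
    simp only [zero_add, add_zero] at this ⊢
    rw [hurwitzSum_zero_right z hs, sum_congr rfl fun j hj => congrArg (z j * ·) (this j hj),
      ← sum_mul, ← add_mul, ← pow_succ', Nat.sub_add_cancel hs.card_pos]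
  exact isOpen_univ.eqOn_of_deriv_eq isPreconnected_univ
    (fun w _ => (hderiv w).differentiableAt.differentiableWithinAt)
    (fun w _ => (hderiv' w).differentiableAt.differentiableWithinAt)
    (fun w _ => (hderiv w).deriv.trans (hderiv' w).deriv.symm) (Set.mem_univ 0) hzero
    (Set.mem_univ y)

theorem sum_pow_mul_pow_sdiff (z : ι → ℝ) (s : Finset ι) (x : ℝ) :
    ∑ B ∈ s.powerset with B.Nonempty,
        (∑ i ∈ B, z i) ^ (#B - 1) * (x + ∑ i ∈ s \ B, z i) ^ #(s \ B)
      = #s * (x + ∑ i ∈ s, z i) ^ (#s - 1) := by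
  have hB_erase : ∀ j ∈ s, hurwitzSum z (s.erase j) (z j) x = (x + ∑ i ∈ s, z i) ^ (#s - 1) := by
    intro j hj
    rw [hurwitzSum_eq, card_erase_of_mem hj, ← add_sum_erase _ _ hj]
    ring_nf
  calc _ = ∑ B ∈ s.powerset, ∑ j ∈ B,
        abelPoly z (B.erase j) (z j) *
          (x + ∑ i ∈ s.erase j \ B.erase j, z i) ^ #(s.erase j \ B.erase j) := by
        rw [← sum_filter_of_ne fun B _ h => nonempty_of_sum_ne_zero h]
        refine sum_congr rfl fun B hB => ?_
        have hB_ne := (mem_filter.1 hB).2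
        rw [← sum_abelPoly_erase z hB_ne, sum_mul]
        refine sum_congr rfl fun j hj => ?_
        rw [← erase_sdiff_distrib, erase_eq_of_notMem fun h => (mem_sdiff.1 h).2 hj]
    _ = ∑ j ∈ s, hurwitzSum z (s.erase j) (z j) x := by
        simp only [hurwitzSum]
        exact (sum_sum_powerset_erase s fun j S =>
          abelPoly z S (z j) * (x + ∑ i ∈ s.erase j \ S, z i) ^ #(s.erase j \ S)).symm
    _ = _ := by rw [sum_congr rfl hB_erase, sum_const, nsmul_eq_mul]

end Abel

theorem stmt_5 (m : ℕ) (hm : 2 ≤ m) (l : Fin m → ℝ) :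
    ∑ I ∈ Finset.univ.filter
        (fun I : Finset (Fin m) => (⟨0, by omega⟩ : Fin m) ∈ I ∧ I ≠ Finset.univ),
      (∑ i ∈ I, l i) ^ (I.card - 1) * (∑ i ∈ Iᶜ, l i) ^ (Iᶜ.card - 1)
      = ((m : ℝ) - 1) * (∑ i, l i) ^ (m - 2) := by
  set o : Fin m := ⟨0, by omega⟩
  have key := sum_pow_mul_pow_sdiff l (univ.erase o) (l o)
  rw [card_erase_of_mem (mem_univ o), card_univ, Fintype.card_fin, add_sum_erase _ _ (mem_univ o),
    Nat.cast_sub (by omega), Nat.cast_one, Nat.sub_sub, one_add_one_eq_two] at key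
  rw [← key]
  refine sum_nbij' compl compl ?_ ?_ (fun I _ => compl_compl I) (fun I _ => compl_compl I) ?_
  · intro I hI
    simp only [mem_filter, mem_univ, true_and, mem_powerset, subset_erase, subset_univ, mem_compl,
      not_not, nonempty_iff_ne_empty, ne_eq, compl_eq_empty_iff] at hI ⊢
    exact hI
  · intro B hB
    simp only [mem_filter, mem_powerset, subset_erase, mem_univ, mem_compl, true_and] at hB ⊢
    exact ⟨hB.1.2, (compl_ne_univ_iff_nonempty B).2 hB.2⟩
  · intro I hI
    have hI0 : o ∈ I := (mem_filter.1 hI).2.1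
    have hcompl : univ.erase o \ Iᶜ = I.erase o := by ext; simp
    rw [hcompl, add_sum_erase _ _ hI0, card_erase_of_mem hI0, mul_comm]
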